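/- arXiv:2103.06064 — 2 statements merged into one kernel-verified Lean document; each statement's English description precedes it below -/
import Mathlib

section
/- Let ℓ(Y) = ‖Y−F‖_F² + λ·Σ_{{i,j}∈E} ρ(‖y_i−y_j‖₂²) with ρ concave, non-decreasing, and differentiable, admitting a minimizer Y°. Then with fixed weights γ*_{ij} = ρ'(‖y°_i − y°_j‖₂²), Y° is also a global minimizer of the quadratic surrogate ℓ̂(Y; Γ*) = ‖Y−F‖_F² + λ·Σ_{{i,j}∈E} γ*_{ij}‖y_i−y_j‖₂². -/
open Matrix Set Finset

lemma concave_tangent_aux (ρ ρ' : ℝ → ℝ) (hconc : ConcaveOn ℝ (Ici 0) ρ)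
    (hderiv : ∀ w : ℝ, 0 ≤ w → HasDerivAt ρ (ρ' w) w)
    {w0 w : ℝ} (h0 : 0 ≤ w0) (h : 0 ≤ w) :
    ρ w ≤ ρ w0 + ρ' w0 * (w - w0) := by
  have hcv : ConvexOn ℝ (Ici 0) (fun x => -ρ x) := hconc.neg
  have hd : HasDerivAt (fun x => -ρ x) (-(ρ' w0)) w0 := (hderiv w0 h0).neg
  rcases lt_trichotomy w w0 with hlt | heq | hgt
  · have := hcv.slope_le_of_hasDerivAt (f' := -(ρ' w0)) h h0 hlt hd
    rw [slope_def_field] at this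
    have hne : w0 - w ≠ 0 := by linarith
    have := (div_le_iff₀ (by linarith : (0:ℝ) < w0 - w)).mp this
    simp only [neg_sub_neg] at this
    nlinarith
  · simp [heq]
  · have := hcv.le_slope_of_hasDerivAt (f' := -(ρ' w0)) h0 h hgt hd
    rw [slope_def_field] at this
    have h2 := (le_div_iff₀ (by linarith : (0:ℝ) < w - w0)).mp this
    nlinarith

/-- Corollary 3.2.1: if `Y°` minimizes
`ℓ(Y) = ‖Y−F‖_F² + λΣ_{{i,j}∈E} ρ(‖y_i−y_j‖²)` with `ρ` concave, non-decreasing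
and differentiable on `[0,∞)`, then with the fixed weights
`γ*_{ij} = ρ'(‖y°_i−y°_j‖²)`, `Y°` is also a global minimizer of the quadratic
surrogate `ℓ̂(Y;Γ*) = ‖Y−F‖_F² + λΣ γ*_{ij}‖y_i−y_j‖²`. -/
theorem stmt_16 {n d : ℕ} (lam : ℝ) (hlam : 0 < lam)
    (E : Finset (Fin n × Fin n))
    (ρ ρ' : ℝ → ℝ) (hconc : ConcaveOn ℝ (Ici 0) ρ)
    (hmono : MonotoneOn ρ (Ici 0))
    (hderiv : ∀ w : ℝ, 0 ≤ w → HasDerivAt ρ (ρ' w) w)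
    (F : Matrix (Fin n) (Fin d) ℝ) :
    let d2 : Matrix (Fin n) (Fin d) ℝ → Fin n × Fin n → ℝ := fun Y e =>
      ∑ k, (Y e.1 k - Y e.2 k) ^ 2
    let ℓ : Matrix (Fin n) (Fin d) ℝ → ℝ := fun Y =>
      ((Y - F)ᵀ * (Y - F)).trace + lam * ∑ e ∈ E, ρ (d2 Y e)
    ∀ Y0 : Matrix (Fin n) (Fin d) ℝ, (∀ Y, ℓ Y0 ≤ ℓ Y) →
    let γs : Fin n × Fin n → ℝ := fun e => ρ' (d2 Y0 e)
    let ℓhat : Matrix (Fin n) (Fin d) ℝ → ℝ := fun Y =>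
      ((Y - F)ᵀ * (Y - F)).trace + lam * ∑ e ∈ E, γs e * d2 Y e
    ∀ Y, ℓhat Y0 ≤ ℓhat Y := by
  intro d2 ℓ Y0 hmin γs ℓhat Y
  have hw : ∀ Z : Matrix (Fin n) (Fin d) ℝ, ∀ e, 0 ≤ d2 Z e := fun Z e =>
    Finset.sum_nonneg fun k _ => sq_nonneg _
  have key : ∀ e ∈ E, ρ (d2 Y e) - ρ (d2 Y0 e) ≤ γs e * (d2 Y e - d2 Y0 e) := by
    intro e _
    have := concave_tangent_aux ρ ρ' hconc hderiv (hw Y0 e) (hw Y e)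
    simp only [γs]; linarith
  have hsum : ∑ e ∈ E, (ρ (d2 Y e) - ρ (d2 Y0 e)) ≤
      ∑ e ∈ E, γs e * (d2 Y e - d2 Y0 e) := Finset.sum_le_sum key
  have h1 : ℓ Y0 ≤ ℓ Y := hmin Y
  simp only [ℓ, ℓhat] at h1 ⊢
  rw [Finset.sum_sub_distrib] at hsum
  simp only [mul_sub, Finset.sum_sub_distrib] at hsum
  nlinarith [mul_le_mul_of_nonneg_left hsum hlam.le]
end

section
/- If p: ℝ → (0,∞) is a Gaussian scale mixture, i.e., p(u) = ∫ N(u | 0, γ⁻¹) dμ(γ) for a positive measure μ on (0,∞), then s ↦ −log p(√s) is a concave, non-decreasing function of s on (0,∞), up to additive constant; equivalently, p(√s) = exp(−ρ(s)) for some concave non-decreasing ρ. -/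
open Set MeasureTheory Real

/-- Lemma 3.1: if `p(u) = ∫ N(u | 0, γ⁻¹) dμ(γ)` is a Gaussian
scale mixture (μ a nonzero finite positive measure on `(0,∞)`), then
`s ↦ −log p(√s)` is concave and non-decreasing on `(0,∞)`; equivalently, with
`g(s) = ∫ √(γ/(2π)) e^{−γ s/2} dμ(γ) = p(√s)`, the function `s ↦ −log g(s)` is
concave and non-decreasing. -/
theorem stmt_17 (μ : Measure ℝ) [IsFiniteMeasure μ] (hμ : μ ≠ 0)
    (hsupp : ∀ᵐ γ ∂μ, 0 < γ)
    (hint : ∀ s : ℝ, 0 < s →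
      Integrable (fun γ : ℝ => Real.sqrt (γ / (2 * π)) * Real.exp (-(γ * s) / 2)) μ) :
    let g : ℝ → ℝ := fun s =>
      ∫ γ, Real.sqrt (γ / (2 * π)) * Real.exp (-(γ * s) / 2) ∂μ
    ConcaveOn ℝ (Ioi 0) (fun s => -Real.log (g s)) ∧
    MonotoneOn (fun s => -Real.log (g s)) (Ioi 0) := by
  intro g
  set F : ℝ → ℝ → ℝ := fun s γ => Real.sqrt (γ / (2 * π)) * Real.exp (-(γ * s) / 2) with hF
  have hFnn : ∀ s γ : ℝ, 0 ≤ F s γ := fun s γ =>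
    mul_nonneg (Real.sqrt_nonneg _) (Real.exp_pos _).le
  have hFpos : ∀ s γ : ℝ, 0 < γ → 0 < F s γ := by
    intro s γ hγ
    exact mul_pos (Real.sqrt_pos.mpr (div_pos hγ (by positivity))) (Real.exp_pos _)
  -- positivity of g on (0, ∞)
  have hg_pos : ∀ s ∈ Ioi (0 : ℝ), 0 < g s := by
    intro s hs
    refine (integral_pos_iff_support_of_nonneg_ae (ae_of_all _ (hFnn s)) (hint s hs)).mpr ?_
    have hcompl : μ (Function.support (F s))ᶜ = 0 := by
      refine measure_mono_null ?_ hsupp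
      intro γ hγ
      simp only [mem_compl_iff, Function.mem_support, not_not] at hγ
      simp only [mem_compl_iff, mem_setOf_eq]
      intro hpos
      exact (hFpos s γ hpos).ne' hγ
    by_contra h
    push_neg at h
    have hsup0 : μ (Function.support (F s)) = 0 := le_antisymm h bot_le
    have : μ univ = 0 := by
      have := measure_union_le (μ := μ) (Function.support (F s)) (Function.support (F s))ᶜ
      rwa [union_compl_self, hsup0, hcompl, add_zero, le_zero_iff] at this
    exact hμ (Measure.measure_univ_eq_zero.mp this)
  -- g is antitone on (0, ∞)
  have hganti : ∀ s t : ℝ, s ∈ Ioi 0 → t ∈ Ioi 0 → s ≤ t → g t ≤ g s := by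
    intro s t hs ht hst
    refine integral_mono_ae (hint t ht) (hint s hs) ?_
    filter_upwards [hsupp] with γ hγ
    have : -(γ * t) / 2 ≤ -(γ * s) / 2 := by nlinarith
    exact mul_le_mul_of_nonneg_left (Real.exp_le_exp.mpr this) (Real.sqrt_nonneg _)
  have hmono : MonotoneOn (fun s => -Real.log (g s)) (Ioi 0) := by
    intro s hs t ht hst
    simp only [neg_le_neg_iff]
    exact Real.log_le_log (hg_pos t ht) (hganti s t hs ht hst)
  -- Hölder's inequality: log-convexity of g
  have key : ∀ x y a b : ℝ, x ∈ Ioi 0 → y ∈ Ioi 0 → 0 < a → 0 < b → a + b = 1 →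
      g (a * x + b * y) ≤ g x ^ a * g y ^ b := by
    intro x y a b hx hy ha hb hab
    have e : Real.HolderConjugate (1 / a) (1 / b) := Real.holderConjugate_one_div ha hb hab
    have hmem : ∀ s : ℝ, 0 < s → ∀ c : ℝ, 0 < c →
        MemLp (fun γ => F s γ ^ c) (ENNReal.ofReal (1 / c)) μ := by
      intro s hs c hc
      have A : ENNReal.ofReal (1 / c) ≠ 0 := by
        rwa [Ne, ENNReal.ofReal_eq_zero, not_le, one_div_pos]
      have B : ENNReal.ofReal (1 / c) ≠ ⊤ := ENNReal.ofReal_ne_top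
      have hFm : AEStronglyMeasurable (fun γ => F s γ ^ c) μ :=
        ((hint s hs).1.aemeasurable.pow aemeasurable_const).aestronglyMeasurable
      rw [← memLp_norm_rpow_iff hFm A B, ENNReal.toReal_ofReal (one_div_nonneg.mpr hc.le),
        ENNReal.div_self A B, memLp_one_iff_integrable]
      refine (hint s hs).congr (ae_of_all _ fun γ => ?_)
      show F s γ = ‖F s γ ^ c‖ ^ (1 / c)
      rw [Real.norm_of_nonneg (Real.rpow_nonneg (hFnn s γ) c), ← Real.rpow_mul (hFnn s γ),
        mul_one_div_cancel hc.ne', Real.rpow_one]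
    have posf : ∀ s c : ℝ, 0 ≤ᵐ[μ] fun γ => F s γ ^ c :=
      fun s c => ae_of_all _ fun γ => Real.rpow_nonneg (hFnn s γ) c
    have hxy : 0 < a * x + b * y := by
      have := mem_Ioi.mp hx; have := mem_Ioi.mp hy; positivity
    have := MeasureTheory.integral_mul_le_Lp_mul_Lq_of_nonneg e (posf x a) (posf y b)
      (hmem x hx a ha) (hmem y hy b hb)
    have hL : g (a * x + b * y) = ∫ γ, F x γ ^ a * F y γ ^ b ∂μ := by
      refine integral_congr_ae ?_
      filter_upwards [hsupp] with γ hγ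
      have hsq : (0 : ℝ) < Real.sqrt (γ / (2 * π)) :=
        Real.sqrt_pos.mpr (div_pos hγ (by positivity))
      simp only [hF]
      rw [Real.mul_rpow hsq.le (Real.exp_pos _).le, Real.mul_rpow hsq.le (Real.exp_pos _).le,
        ← Real.exp_mul, ← Real.exp_mul]
      calc Real.sqrt (γ / (2 * π)) * Real.exp (-(γ * (a * x + b * y)) / 2)
          = (Real.sqrt (γ / (2 * π)) ^ a * Real.sqrt (γ / (2 * π)) ^ b) *
            (Real.exp (-(γ * x) / 2 * a + -(γ * y) / 2 * b)) := by
            rw [← Real.rpow_add hsq, hab, Real.rpow_one]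
            congr 1
            ring_nf
        _ = Real.sqrt (γ / (2 * π)) ^ a * Real.exp (-(γ * x) / 2 * a) *
            (Real.sqrt (γ / (2 * π)) ^ b * Real.exp (-(γ * y) / 2 * b)) := by
            rw [Real.exp_add]; ring
    have hR : ∀ s : ℝ, 0 < s → ∀ c : ℝ, 0 < c →
        (∫ γ, (F s γ ^ c) ^ (1 / c) ∂μ) = g s := by
      intro s hs c hc
      refine integral_congr_ae (ae_of_all _ fun γ => ?_)
      show (F s γ ^ c) ^ (1 / c) = F s γ
      rw [← Real.rpow_mul (hFnn s γ), mul_one_div_cancel hc.ne', Real.rpow_one]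
    rw [hL]
    calc (∫ γ, F x γ ^ a * F y γ ^ b ∂μ)
        ≤ (∫ γ, (F x γ ^ a) ^ (1 / a) ∂μ) ^ (1 / (1 / a)) *
          (∫ γ, (F y γ ^ b) ^ (1 / b) ∂μ) ^ (1 / (1 / b)) := this
      _ = g x ^ a * g y ^ b := by
          rw [hR x (mem_Ioi.mp hx) a ha, hR y (mem_Ioi.mp hy) b hb,
            one_div_one_div, one_div_one_div]
  refine ⟨?_, hmono⟩
  refine concaveOn_iff_forall_pos.mpr ⟨convex_Ioi _, fun x hx y hy a b ha hb hab => ?_⟩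
  have hx' := hg_pos x hx
  have hy' := hg_pos y hy
  have hxy : a * x + b * y ∈ Ioi (0 : ℝ) := by
    have := mem_Ioi.mp hx; have := mem_Ioi.mp hy
    exact mem_Ioi.mpr (by positivity)
  have h1 := key x y a b hx hy ha hb hab
  have h2 : Real.log (g (a * x + b * y)) ≤ a * Real.log (g x) + b * Real.log (g y) := by
    calc Real.log (g (a * x + b * y)) ≤ Real.log (g x ^ a * g y ^ b) :=
          Real.log_le_log (hg_pos _ hxy) h1
      _ = a * Real.log (g x) + b * Real.log (g y) := by
          rw [Real.log_mul (Real.rpow_pos_of_pos hx' a).ne' (Real.rpow_pos_of_pos hy' b).ne',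
            Real.log_rpow hx', Real.log_rpow hy']
  simp only [smul_eq_mul]
  linarith
end
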